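/- arXiv:2302.11477 — 2 statements merged into one kernel-verified Lean document; each statement's English description precedes it below -/
import Mathlib

section
/- Let L be an n×n symmetric positive definite matrix. Then the function f : 2^{Fin n} → ℝ defined by f(C) = log det(L_C) (with f(∅) = 0) is submodular: for all subsets A ⊆ B ⊆ Fin n and any element i ∉ B, f(A ∪ {i}) − f(A) ≥ f(B ∪ {i}) − f(B). -/
/-!
Write `s_C(i)` for the Schur complement of `L_C` in `L_{C ∪ {i}}`, so that
`det L_{C ∪ {i}} = det L_C · s_C(i)`. Completing the square shows
`s_C(i) = min {vᵀ L v | v i = 1, supp v ⊆ C ∪ {i}}`. Enlarging `C` enlarges the feasible set,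
so `s_C(i)` is antitone in `C`; it is positive as the minimum of a positive definite form over
nonzero vectors. The submodularity inequality is then `log s_B(i) ≤ log s_A(i)`.
-/

/-- Principal minor of `L` indexed by `C`, with value `1` when `C = ∅`. -/
def pminor {n : ℕ} (L : Matrix (Fin n) (Fin n) ℝ) (C : Finset (Fin n)) : ℝ :=
  (L.submatrix (fun i : C => (i : Fin n)) (fun j : C => (j : Fin n))).det

open Matrix

namespace Matrix

variable {ι κ : Type*} [Fintype ι] [Fintype κ]

theorem dotProduct_mulVec_submatrix_comp {R : Type*} [CommSemiring R] (L : Matrix κ κ R)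
    {g : ι → κ} (hg : g.Injective) {v : κ → R} (hv : ∀ j ∉ Set.range g, v j = 0) :
    (v ∘ g) ⬝ᵥ L.submatrix g g *ᵥ (v ∘ g) = v ⬝ᵥ L *ᵥ v := by
  simp only [dotProduct, mulVec, Function.comp_apply, submatrix_apply]
  refine Fintype.sum_of_injective g hg _ _ (fun j hj => by simp [hv j hj]) fun a => ?_
  congr 1
  exact Fintype.sum_of_injective g hg _ _ (fun j hj => by simp [hv j hj]) fun b => rfl

noncomputable def schurCompl [DecidableEq ι] (M : Matrix (ι ⊕ Unit) (ι ⊕ Unit) ℝ) : ℝ :=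
  (M.toBlocks₂₂ - M.toBlocks₂₁ * M.toBlocks₁₁⁻¹ * M.toBlocks₁₂) () ()

variable [DecidableEq ι] {M : Matrix (ι ⊕ Unit) (ι ⊕ Unit) ℝ}

theorem PosDef.det_eq_mul_schurCompl (hM : M.PosDef) :
    M.det = M.toBlocks₁₁.det * schurCompl M := by
  have : Invertible M.toBlocks₁₁ := (hM.submatrix Sum.inl_injective).isUnit.invertible
  conv_lhs => rw [← fromBlocks_toBlocks M]
  rw [det_fromBlocks₁₁, invOf_eq_nonsing_inv, det_unique (n := Unit)]
  rfl

theorem PosDef.isLeast_schurCompl (hM : M.PosDef) :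
    IsLeast (Set.range fun x : ι → ℝ => (x ⊕ᵥ 1) ⬝ᵥ M *ᵥ (x ⊕ᵥ 1)) (schurCompl M) := by
  set A := M.toBlocks₁₁
  set B := M.toBlocks₁₂
  have hA : A.PosDef := hM.submatrix Sum.inl_injective
  have := hA.isUnit.invertible
  have hBC : Bᴴ = M.toBlocks₂₁ := by
    have hH := hM.1
    rw [← fromBlocks_toBlocks M, isHermitian_fromBlocks_iff] at hH
    exact hH.2.1
  have hquad (x : ι → ℝ) : (x ⊕ᵥ 1) ⬝ᵥ M *ᵥ (x ⊕ᵥ 1) =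
      (x + (A⁻¹ * B) *ᵥ 1) ⬝ᵥ A *ᵥ (x + (A⁻¹ * B) *ᵥ 1) + schurCompl M := by
    have := schur_complement_eq₁₁ B M.toBlocks₂₂ x 1 hA.1
    rw [hBC, fromBlocks_toBlocks] at this
    simp only [star_trivial, ← dotProduct_mulVec] at this
    rw [this, schurCompl]
    simp [dotProduct, mulVec, A, B]
  refine ⟨⟨-((A⁻¹ * B) *ᵥ 1), ?_⟩, ?_⟩
  · simp [hquad]
  · rintro _ ⟨x, rfl⟩
    dsimp only
    rw [hquad]
    exact le_add_of_nonneg_left (hA.posSemidef.dotProduct_mulVec_nonneg _)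

end Matrix

section InsertIndex

variable {κ : Type*} {C : Finset κ} {i : κ}

/-- Lists `insert i C` as `C ⊕ Unit` with `i` last, making `L_{insert i C}` a block matrix. -/
def insertIndex (C : Finset κ) (i : κ) : C ⊕ Unit → κ := Sum.elim (↑) fun _ => i

theorem insertIndex_injective (hi : i ∉ C) : (insertIndex C i).Injective := by
  rintro (a | ⟨⟩) (b | ⟨⟩) h <;> simp only [insertIndex, Sum.elim_inl, Sum.elim_inr] at h
  · exact congrArg Sum.inl (Subtype.ext h)
  · exact absurd (h ▸ a.2) hi
  · exact absurd (h ▸ b.2) hi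
  · rfl

theorem range_insertIndex [DecidableEq κ] : Set.range (insertIndex C i) = ↑(insert i C) := by
  simp [insertIndex, Set.Sum.elim_range]

theorem det_submatrix_insertIndex [DecidableEq κ] {R : Type*} [CommRing R] (L : Matrix κ κ R)
    (hi : i ∉ C) :
    (L.submatrix (insertIndex C i) (insertIndex C i)).det =
      (L.submatrix (fun j : ↥(insert i C) => (j : κ)) (fun j : ↥(insert i C) => (j : κ))).det := by
  let e := (Finset.subtypeInsertEquivOption hi).trans (Equiv.optionEquivSumPUnit C)
  have he : insertIndex C i ∘ e = (↑) := by
    ext ⟨j, hj⟩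
    by_cases hji : j = i <;> simp [e, insertIndex, Finset.subtypeInsertEquivOption, hji]
  rw [← det_submatrix_equiv_self e, submatrix_submatrix, he]

end InsertIndex

section SchurInsert

variable {κ : Type*} [Fintype κ] [DecidableEq κ] {L : Matrix κ κ ℝ} {A B C : Finset κ} {i : κ}

noncomputable def schurInsert (L : Matrix κ κ ℝ) (C : Finset κ) (i : κ) : ℝ :=
  schurCompl (L.submatrix (insertIndex C i) (insertIndex C i))

theorem Matrix.PosDef.isLeast_schurInsert (hL : L.PosDef) (hi : i ∉ C) :
    IsLeast ((fun v => v ⬝ᵥ L *ᵥ v) '' {v | v i = 1 ∧ ∀ j ∉ insert i C, v j = 0})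
      (schurInsert L C i) := by
  have hg := insertIndex_injective hi
  unfold schurInsert
  convert (hL.submatrix hg).isLeast_schurCompl using 1
  ext q
  constructor
  · rintro ⟨v, ⟨hvi, hv0⟩, rfl⟩
    refine ⟨v ∘ Subtype.val, ?_⟩
    have hvg : v ∘ insertIndex C i = (v ∘ Subtype.val) ⊕ᵥ 1 := by
      ext (a | ⟨⟩)
      · rfl
      · exact hvi
    dsimp only
    rw [← hvg, dotProduct_mulVec_submatrix_comp L hg]
    simpa [range_insertIndex] using hv0
  · rintro ⟨x, rfl⟩
    set v := Function.extend (insertIndex C i) (x ⊕ᵥ 1) 0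
    have hvg : v ∘ insertIndex C i = x ⊕ᵥ 1 := Function.extend_comp hg _ _
    have hv0 (j) (hj : j ∉ Set.range (insertIndex C i)) : v j = 0 :=
      Function.extend_apply' _ _ _ hj
    refine ⟨v, ⟨congrFun hvg (Sum.inr ()), fun j hj => ?_⟩, ?_⟩
    · exact hv0 j (by rwa [range_insertIndex, Finset.mem_coe])
    dsimp only
    rw [← hvg, dotProduct_mulVec_submatrix_comp L hg hv0]

theorem Matrix.PosDef.schurInsert_pos (hL : L.PosDef) (hi : i ∉ C) : 0 < schurInsert L C i := by
  obtain ⟨v, ⟨hvi, -⟩, hv⟩ := (hL.isLeast_schurInsert hi).1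
  rw [← hv]
  exact hL.dotProduct_mulVec_pos fun h => by simp [h] at hvi

theorem Matrix.PosDef.schurInsert_antitone (hL : L.PosDef) (hAB : A ⊆ B) (hi : i ∉ B) :
    schurInsert L B i ≤ schurInsert L A i :=
  (hL.isLeast_schurInsert fun h => hi (hAB h)).mono (hL.isLeast_schurInsert hi) <|
    Set.image_mono fun _ ⟨hvi, hv0⟩ =>
      ⟨hvi, fun j hj => hv0 j fun h => hj (Finset.insert_subset_insert i hAB h)⟩

end SchurInsert

theorem pminor_insert {n : ℕ} {L : Matrix (Fin n) (Fin n) ℝ} (hL : L.PosDef) {C : Finset (Fin n)}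
    {i : Fin n} (hi : i ∉ C) : pminor L (insert i C) = pminor L C * schurInsert L C i := by
  rw [pminor, ← det_submatrix_insertIndex L hi, schurInsert,
    (hL.submatrix (insertIndex_injective hi)).det_eq_mul_schurCompl]
  rfl

theorem pminor_pos {n : ℕ} {L : Matrix (Fin n) (Fin n) ℝ} (hL : L.PosDef) (C : Finset (Fin n)) :
    0 < pminor L C :=
  (hL.submatrix Subtype.val_injective).det_pos

/-- `C ↦ log det (L_C)` is submodular for a symmetric positive definite `L`. -/
theorem logdet_pminor_submodular {n : ℕ} (L : Matrix (Fin n) (Fin n) ℝ)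
    (hL : L.PosDef) (A B : Finset (Fin n)) (hAB : A ⊆ B) (i : Fin n) (hi : i ∉ B) :
    Real.log (pminor L (insert i B)) - Real.log (pminor L B)
      ≤ Real.log (pminor L (insert i A)) - Real.log (pminor L A) := by
  have hiA : i ∉ A := fun h => hi (hAB h)
  rw [pminor_insert hL hi, pminor_insert hL hiA,
    Real.log_mul (pminor_pos hL B).ne' (hL.schurInsert_pos hi).ne',
    Real.log_mul (pminor_pos hL A).ne' (hL.schurInsert_pos hiA).ne', add_sub_cancel_left,
    add_sub_cancel_left]
  exact Real.log_le_log (hL.schurInsert_pos hi) (hL.schurInsert_antitone hAB hi)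
end

section
/- Let u : Fin m → ℝ be deterministic utilities and ε : Fin m → ℝ be i.i.d. standard Gumbel random variables (CDF F(t) = exp(−exp(−t))). Then for each alternative i, the probability that u(i) + ε(i) strictly exceeds u(j) + ε(j) for all j ≠ i equals exp(u(i)) / Σ_{j} exp(u(j)) (the softmax of the utilities). -/
/-!
Condition on `ε i = t`. Alternative `j ≠ i` then loses independently with probability
`F (t + u i - u j)`, where `F t = exp (-exp (-t))`, and the product of these is
`exp (-A * exp (-t))` with `A = ∑_{j ≠ i} exp (u j - u i)`. Multiplying the Gumbel density by
this factor gives `(1 + A)⁻¹` times its translate by `log (1 + A)`, so integrating over `t`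
yields `(1 + A)⁻¹`, which is the softmax.
-/

open MeasureTheory ProbabilityTheory Real Set Filter Topology

namespace ProbabilityTheory

noncomputable def gumbelPDFReal (t : ℝ) : ℝ := exp (-t - exp (-t))

noncomputable def gumbelReal : Measure ℝ :=
  volume.withDensity fun t => ENNReal.ofReal (gumbelPDFReal t)

lemma integrable_gumbelPDFReal : Integrable gumbelPDFReal := by
  have hmeas : AEStronglyMeasurable gumbelPDFReal volume :=
    (by unfold gumbelPDFReal; fun_prop : Continuous gumbelPDFReal).aestronglyMeasurable
  rw [← integrableOn_univ, ← Iic_union_Ioi (a := 0)]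
  refine .union ((integrableOn_exp_Iic 0).mono' hmeas.restrict ?_)
    ((exp_neg_integrableOn_Ioi 0 one_pos).mono' hmeas.restrict ?_)
  · refine .of_forall fun t => ?_
    unfold gumbelPDFReal
    rw [norm_of_nonneg (exp_nonneg _)]
    exact exp_le_exp.2 (by linarith [two_mul_le_exp (x := -t)])
  · refine .of_forall fun t => ?_
    unfold gumbelPDFReal
    rw [norm_of_nonneg (exp_nonneg _), neg_one_mul]
    exact exp_le_exp.2 (by linarith [exp_pos (-t)])

lemma hasDerivAt_exp_neg_exp_neg (t : ℝ) :
    HasDerivAt (fun t => exp (-exp (-t))) (gumbelPDFReal t) t := by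
  refine ((hasDerivAt_neg t).exp.neg).exp.congr_deriv ?_
  rw [gumbelPDFReal, sub_eq_add_neg, exp_add, Pi.neg_apply]
  ring

lemma tendsto_exp_neg_exp_neg_atBot : Tendsto (fun t => exp (-exp (-t))) atBot (𝓝 0) :=
  tendsto_exp_atBot.comp <|
    tendsto_neg_atTop_atBot.comp (tendsto_exp_atTop.comp tendsto_neg_atBot_atTop)

lemma tendsto_exp_neg_exp_neg_atTop : Tendsto (fun t => exp (-exp (-t))) atTop (𝓝 1) := by
  have h : Tendsto (fun t : ℝ => -exp (-t)) atTop (𝓝 0) := by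
    simpa using (tendsto_exp_atBot.comp tendsto_neg_atTop_atBot).neg
  simpa only [Function.comp_def, exp_zero] using (continuous_exp.tendsto 0).comp h

instance : IsProbabilityMeasure gumbelReal := by
  constructor
  rw [gumbelReal, withDensity_apply _ MeasurableSet.univ, Measure.restrict_univ,
    ← ofReal_integral_eq_lintegral_ofReal integrable_gumbelPDFReal
      (.of_forall fun _ => exp_nonneg _),
    integral_of_hasDerivAt_of_tendsto hasDerivAt_exp_neg_exp_neg integrable_gumbelPDFReal
      tendsto_exp_neg_exp_neg_atBot tendsto_exp_neg_exp_neg_atTop]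
  simp

lemma gumbelReal_Iic (t : ℝ) : gumbelReal (Iic t) = ENNReal.ofReal (exp (-exp (-t))) := by
  rw [gumbelReal, withDensity_apply _ measurableSet_Iic,
    ← ofReal_integral_eq_lintegral_ofReal integrable_gumbelPDFReal.integrableOn
      (.of_forall fun _ => exp_nonneg _),
    integral_Iic_of_hasDerivAt_of_tendsto' (fun x _ => hasDerivAt_exp_neg_exp_neg x)
      integrable_gumbelPDFReal.integrableOn tendsto_exp_neg_exp_neg_atBot, sub_zero]

lemma gumbelReal_Iio (t : ℝ) : gumbelReal (Iio t) = ENNReal.ofReal (exp (-exp (-t))) := by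
  rw [← gumbelReal_Iic, gumbelReal,
    measure_congr ((withDensity_absolutelyContinuous _ _).ae_eq Iio_ae_eq_Iic)]

lemma map_eq_gumbelReal {Ω : Type*} [MeasurableSpace Ω] {μ : Measure Ω}
    [IsProbabilityMeasure μ] {X : Ω → ℝ} (hX : Measurable X)
    (hcdf : ∀ t, μ {ω | X ω ≤ t} = ENNReal.ofReal (exp (-exp (-t)))) :
    μ.map X = gumbelReal := by
  have := Measure.isProbabilityMeasure_map (μ := μ) hX.aemeasurable
  refine Measure.ext_of_Iic _ _ fun t => ?_
  rw [Measure.map_apply hX measurableSet_Iic, gumbelReal_Iic]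
  exact hcdf t

lemma gumbelPDFReal_sub_log {b : ℝ} (hb : 0 < b) (t : ℝ) :
    gumbelPDFReal (t - log b) = b * exp (-t - b * exp (-t)) := by
  have h : exp (-(t - log b)) = b * exp (-t) := by
    rw [show -(t - log b) = log b + -t by ring, exp_add, exp_log hb]
  rw [gumbelPDFReal, h, show -(t - log b) - b * exp (-t) = log b + (-t - b * exp (-t)) by ring,
    exp_add, exp_log hb]

lemma lintegral_exp_neg_mul_exp_neg_gumbelReal {a : ℝ} (ha : 0 ≤ a) :
    ∫⁻ t, ENNReal.ofReal (exp (-(a * exp (-t)))) ∂gumbelReal = ENNReal.ofReal (1 + a)⁻¹ := by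
  have hb : 0 < 1 + a := by linarith
  have hdensity : ∀ t, ENNReal.ofReal (gumbelPDFReal t) * ENNReal.ofReal (exp (-(a * exp (-t))))
      = ENNReal.ofReal (1 + a)⁻¹ * ENNReal.ofReal (gumbelPDFReal (t - log (1 + a))) := by
    intro t
    have h : gumbelPDFReal t * exp (-(a * exp (-t)))
        = (1 + a)⁻¹ * gumbelPDFReal (t - log (1 + a)) := by
      rw [gumbelPDFReal_sub_log hb, inv_mul_cancel_left₀ hb.ne', gumbelPDFReal, ← exp_add]
      ring_nf
    rw [← ENNReal.ofReal_mul (p := gumbelPDFReal t) (exp_nonneg _), h,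
      ENNReal.ofReal_mul (inv_nonneg.2 hb.le)]
  have hprob : ∫⁻ t, ENNReal.ofReal (gumbelPDFReal t) = 1 := by
    simpa [gumbelReal] using measure_univ (μ := gumbelReal)
  rw [gumbelReal, lintegral_withDensity_eq_lintegral_mul _ (by unfold gumbelPDFReal; fun_prop)
    (by fun_prop)]
  simp only [Pi.mul_apply, hdensity]
  rw [lintegral_const_mul _ (by unfold gumbelPDFReal; fun_prop),
    lintegral_sub_right_eq_self (fun t => ENNReal.ofReal (gumbelPDFReal t)), hprob, mul_one]

lemma prod_gumbelReal_Iio_add {ι : Type*} (s : Finset ι) (c : ι → ℝ) (t : ℝ) :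
    ∏ j ∈ s, gumbelReal (Iio (t + c j))
      = ENNReal.ofReal (exp (-((∑ j ∈ s, exp (-c j)) * exp (-t)))) := by
  simp_rw [gumbelReal_Iio, ← ENNReal.ofReal_prod_of_nonneg (fun _ _ => exp_nonneg _), ← exp_sum,
    Finset.sum_mul, ← Finset.sum_neg_distrib, neg_add, exp_add, mul_comm]

end ProbabilityTheory

namespace MeasureTheory

lemma measurePreserving_eval_prod_restrict_ne {ι : Type*} [Fintype ι] [DecidableEq ι]
    {α : ι → Type*} [∀ j, MeasurableSpace (α j)] (μ : ∀ j, Measure (α j))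
    [∀ j, SigmaFinite (μ j)] (i : ι) :
    MeasurePreserving (fun x : ∀ j, α j => (x i, fun j : {j // j ≠ i} => x j))
      (Measure.pi μ) ((μ i).prod (Measure.pi fun j : {j // j ≠ i} => μ j)) := by
  -- the instance used by `measurePreserving_piEquivPiSubtypeProd`, not `Fintype.subtypeEq`
  let : Fintype {j // j = i} := Subtype.fintype _
  exact ((measurePreserving_piUnique fun j : {j // j = i} => μ j).prod
    (.id (Measure.pi fun j : {j // j ≠ i} => μ j))).comp
    (measurePreserving_piEquivPiSubtypeProd μ (· = i))

lemma Measure.pi_setOf_forall_ne_lt_add {ι : Type*} [Fintype ι] [DecidableEq ι]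
    (μ : ι → Measure ℝ) [∀ j, SigmaFinite (μ j)] (i : ι) (c : ι → ℝ) :
    Measure.pi μ {x | ∀ j ≠ i, x j < x i + c j}
      = ∫⁻ t, ∏ j ∈ Finset.univ.erase i, μ j (Iio (t + c j)) ∂μ i := by
  set T : Set (ℝ × ({j // j ≠ i} → ℝ)) := {p | ∀ j, p.2 j < p.1 + c j}
  have hT : MeasurableSet T := by
    simp only [T, ofPred_forall]
    exact .iInter fun j => measurableSet_lt (by fun_prop) (by fun_prop)
  have hslice : ∀ t, Prod.mk t ⁻¹' T = Set.pi univ fun j : {j // j ≠ i} => Iio (t + c j) := by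
    intro t; ext y; simp [T]
  have hS : {x : ι → ℝ | ∀ j ≠ i, x j < x i + c j}
      = (fun x : ι → ℝ => (x i, fun j : {j // j ≠ i} => x j)) ⁻¹' T := by
    ext x; simp [T]
  rw [hS, (measurePreserving_eval_prod_restrict_ne μ i).measure_preimage hT.nullMeasurableSet,
    Measure.prod_apply hT]
  simp only [hslice, Measure.pi_pi]
  congr with t
  exact (Finset.prod_subtype (Finset.univ.erase i) (p := (· ≠ i)) (by simp)
    fun j => μ j (Iio (t + c j))).symm

end MeasureTheory

lemma Real.exp_div_sum_exp_eq_inv_one_add {ι : Type*} [Fintype ι] [DecidableEq ι]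
    (u : ι → ℝ) (i : ι) :
    exp (u i) / ∑ j, exp (u j) = (1 + ∑ j ∈ Finset.univ.erase i, exp (-(u i - u j)))⁻¹ := by
  simp_rw [← Finset.add_sum_erase _ _ (Finset.mem_univ i), neg_sub, exp_sub, ← Finset.sum_div]
  field_simp

theorem gumbel_argmax_softmax_general {m : ℕ} (u : Fin m → ℝ)
    {Ω : Type*} [MeasurableSpace Ω] (μ : Measure Ω) [IsProbabilityMeasure μ]
    (ε : Fin m → Ω → ℝ) (hmeas : ∀ i, Measurable (ε i))
    (hindep : iIndepFun ε μ)
    (hcdf : ∀ i t, μ {ω | ε i ω ≤ t} = ENNReal.ofReal (Real.exp (-Real.exp (-t))))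
    (i : Fin m) :
    μ {ω | ∀ j, j ≠ i → u j + ε j ω < u i + ε i ω}
      = ENNReal.ofReal (Real.exp (u i) / ∑ j, Real.exp (u j)) := by
  have hlaw : μ.map (fun ω j => ε j ω) = Measure.pi fun _ => gumbelReal := by
    rw [hindep.map_fun_eq_pi_map fun j => (hmeas j).aemeasurable]
    exact congrArg Measure.pi (funext fun j => map_eq_gumbelReal (hmeas j) (hcdf j))
  have hS : MeasurableSet {x : Fin m → ℝ | ∀ j ≠ i, x j < x i + (u i - u j)} := by
    measurability
  calc μ {ω | ∀ j, j ≠ i → u j + ε j ω < u i + ε i ω}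
      = Measure.pi (fun _ => gumbelReal) {x | ∀ j ≠ i, x j < x i + (u i - u j)} := by
        rw [← hlaw, Measure.map_apply (measurable_pi_lambda _ hmeas) hS]
        congr with ω
        exact forall₂_congr fun j _ => by constructor <;> intro h <;> linarith
    _ = ∫⁻ t, ENNReal.ofReal (Real.exp (-((∑ j ∈ Finset.univ.erase i, Real.exp (-(u i - u j)))
          * Real.exp (-t)))) ∂gumbelReal := by
        rw [Measure.pi_setOf_forall_ne_lt_add]
        simp_rw [prod_gumbelReal_Iio_add]
    _ = _ := by
        rw [lintegral_exp_neg_mul_exp_neg_gumbelReal (by positivity),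
          Real.exp_div_sum_exp_eq_inv_one_add]

/-- With i.i.d. standard Gumbel noise added to deterministic utilities, the
probability that alternative `i` strictly maximizes utility is the softmax. -/
theorem gumbel_argmax_softmax {m : ℕ} (hm : 1 ≤ m) (u : Fin m → ℝ)
    {Ω : Type*} [MeasurableSpace Ω] (μ : Measure Ω) [IsProbabilityMeasure μ]
    (ε : Fin m → Ω → ℝ) (hmeas : ∀ i, Measurable (ε i))
    (hindep : iIndepFun ε μ)
    (hcdf : ∀ i t, μ {ω | ε i ω ≤ t} = ENNReal.ofReal (Real.exp (-Real.exp (-t))))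
    (i : Fin m) :
    μ {ω | ∀ j, j ≠ i → u j + ε j ω < u i + ε i ω}
      = ENNReal.ofReal (Real.exp (u i) / ∑ j, Real.exp (u j)) :=
  gumbel_argmax_softmax_general u μ ε hmeas hindep hcdf i
end
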